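/- Let n ≥ 2, μ₁,…,μ_{n+2} ∈ ℝ, S = ∑ μ_k. Define A = ∑ over disjoint pairs {i,j},{k,l} of (μ_i+μ_j)(μ_k+μ_l) (each unordered pair of disjoint 2-subsets counted once) and B = ∑_{i<j<k} (μ_i+μ_j+μ_k)². Then A + B = C(n+1,2)·S². -/

import Mathlib

open Finset

/-!
Symmetrizing, `8 A` is the sum of `(μ_i + μ_j)(μ_k + μ_l)` over ordered quadruples of distinct
indices and `6 B` the sum of `(μ_i + μ_j + μ_k)²` over ordered triples of distinct indices.
Summing out the inner indices over the complement of `{i, j}` expresses both through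
`m = n + 2`, `S` and `Q = ∑ μ_k²`:
`8 A = 4 (m - 2)(m - 3)(S² - Q)` and `6 B = 3 (m - 2)(m - 3) Q + 6 (m - 2) S²`,
so the `Q` terms cancel in `A + B`.
-/

section Rearrangement

variable {α R : Type*} [Fintype α] [AddCommMonoid R] {P Q Q' : α → Prop}
  [DecidablePred P] [DecidablePred Q] [DecidablePred Q'] {f : α → R}

theorem sum_filter_eq_add_of_iff_or (hP : ∀ x, P x ↔ Q x ∨ Q' x) (hQ : ∀ x, Q x → ¬Q' x) :
    ∑ x with P x, f x = ∑ x with Q x, f x + ∑ x with Q' x, f x := by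
  simp only [sum_filter, ← sum_add_distrib]
  refine sum_congr rfl fun x _ => ?_
  by_cases hx : Q x
  · simp [hx, (hP x).2 (Or.inl hx), hQ x hx]
  · by_cases hx' : Q' x <;> simp [hx, hx', hP x]

theorem sum_filter_eq_of_perm (σ : Equiv.Perm α) (hP : ∀ x, P x ↔ Q (σ x))
    (hf : ∀ x, f (σ x) = f x) :
    ∑ x with P x, f x = ∑ x with Q x, f x :=
  sum_equiv σ (by simp [hP]) fun x _ => (hf x).symm

theorem sum_filter_eq_two_nsmul_of_involutive (e : α → α) (he : Function.Involutive e)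
    (hP : ∀ x, P x ↔ Q x ∨ Q (e x)) (hQ : ∀ x, Q x → ¬Q (e x)) (hf : ∀ x, f (e x) = f x) :
    ∑ x with P x, f x = 2 • ∑ x with Q x, f x := by
  rw [sum_filter_eq_add_of_iff_or hP hQ, two_nsmul,
    sum_filter_eq_of_perm (P := fun x => Q (e x)) (he.toPerm e) (fun _ => Iff.rfl) hf]

end Rearrangement

section Symmetrization

variable {ι R : Type*} [Fintype ι] [LinearOrder ι] [AddCommMonoid R]

theorem sum_distinct_triples_eq_six_nsmul (f : ι → ι → ι → R)
    (h₁₂ : ∀ i j k, f i j k = f j i k) (h₂₃ : ∀ i j k, f i j k = f i k j) :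
    ∑ p : ι × ι × ι with p.1 ≠ p.2.1 ∧ p.1 ≠ p.2.2 ∧ p.2.1 ≠ p.2.2, f p.1 p.2.1 p.2.2 =
      6 • ∑ p : ι × ι × ι with p.1 < p.2.1 ∧ p.2.1 < p.2.2, f p.1 p.2.1 p.2.2 := by
  have h_cycle : ∑ p : ι × ι × ι with p.1 < p.2.1 ∧ p.2.2 < p.1, f p.1 p.2.1 p.2.2 =
      ∑ p : ι × ι × ι with p.1 < p.2.1 ∧ p.2.1 < p.2.2, f p.1 p.2.1 p.2.2 :=
    sum_filter_eq_of_perm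
      ⟨fun p => (p.2.2, p.1, p.2.1), fun p => (p.2.1, p.2.2, p.1), fun _ => rfl, fun _ => rfl⟩
      (by grind) fun p => by simp [h₁₂, h₂₃]
  have h_swap₂₃ : ∑ p : ι × ι × ι with p.1 < p.2.1 ∧ p.1 < p.2.2 ∧ p.2.1 ≠ p.2.2,
      f p.1 p.2.1 p.2.2 = 2 • ∑ p : ι × ι × ι with p.1 < p.2.1 ∧ p.2.1 < p.2.2, f p.1 p.2.1 p.2.2 :=
    sum_filter_eq_two_nsmul_of_involutive (fun p => (p.1, p.2.2, p.2.1)) (fun _ => rfl)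
      (by grind) (by grind) fun p => (h₂₃ ..).symm
  calc _ = 2 • ∑ p : ι × ι × ι with p.1 < p.2.1 ∧ p.2.2 ≠ p.1 ∧ p.2.2 ≠ p.2.1,
          f p.1 p.2.1 p.2.2 :=
        sum_filter_eq_two_nsmul_of_involutive (fun p => (p.2.1, p.1, p.2.2)) (fun _ => rfl)
          (by grind) (by grind) fun p => (h₁₂ ..).symm
    _ = 2 • (∑ p : ι × ι × ι with p.1 < p.2.1 ∧ p.2.2 < p.1, f p.1 p.2.1 p.2.2 +
          ∑ p : ι × ι × ι with p.1 < p.2.1 ∧ p.1 < p.2.2 ∧ p.2.1 ≠ p.2.2,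
            f p.1 p.2.1 p.2.2) := by
        congr 1; exact sum_filter_eq_add_of_iff_or (by grind) (by grind)
    _ = _ := by rw [h_cycle, h_swap₂₃]; abel

theorem sum_distinct_quadruples_eq_eight_nsmul (f : ι → ι → ι → ι → R)
    (h₁₂ : ∀ i j k l, f i j k l = f j i k l) (h₃₄ : ∀ i j k l, f i j k l = f i j l k)
    (h_pairs : ∀ i j k l, f i j k l = f k l i j) :
    ∑ p : ι × ι × ι × ι with p.1 ≠ p.2.1 ∧ p.2.2.1 ≠ p.2.2.2 ∧
        p.1 ≠ p.2.2.1 ∧ p.1 ≠ p.2.2.2 ∧ p.2.1 ≠ p.2.2.1 ∧ p.2.1 ≠ p.2.2.2,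
        f p.1 p.2.1 p.2.2.1 p.2.2.2 =
      8 • ∑ p : ι × ι × ι × ι with p.1 < p.2.1 ∧ p.2.2.1 < p.2.2.2 ∧
        p.1 ≠ p.2.2.1 ∧ p.1 ≠ p.2.2.2 ∧ p.2.1 ≠ p.2.2.1 ∧ p.2.1 ≠ p.2.2.2 ∧ p.1 < p.2.2.1,
        f p.1 p.2.1 p.2.2.1 p.2.2.2 := by
  calc _ = 2 • ∑ p : ι × ι × ι × ι with p.1 < p.2.1 ∧ p.2.2.1 ≠ p.2.2.2 ∧
          p.1 ≠ p.2.2.1 ∧ p.1 ≠ p.2.2.2 ∧ p.2.1 ≠ p.2.2.1 ∧ p.2.1 ≠ p.2.2.2,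
          f p.1 p.2.1 p.2.2.1 p.2.2.2 :=
        sum_filter_eq_two_nsmul_of_involutive (fun p => (p.2.1, p.1, p.2.2))
          (fun _ => rfl) (by grind) (by grind) fun p => (h₁₂ ..).symm
    _ = 2 • 2 • ∑ p : ι × ι × ι × ι with p.1 < p.2.1 ∧ p.2.2.1 < p.2.2.2 ∧
          p.1 ≠ p.2.2.1 ∧ p.1 ≠ p.2.2.2 ∧ p.2.1 ≠ p.2.2.1 ∧ p.2.1 ≠ p.2.2.2,
          f p.1 p.2.1 p.2.2.1 p.2.2.2 := by
        congr 1
        exact sum_filter_eq_two_nsmul_of_involutive (fun p => (p.1, p.2.1, p.2.2.2, p.2.2.1))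
          (fun _ => rfl) (by grind) (by grind) fun p => (h₃₄ ..).symm
    _ = 2 • 2 • 2 • ∑ p : ι × ι × ι × ι with p.1 < p.2.1 ∧ p.2.2.1 < p.2.2.2 ∧
          p.1 ≠ p.2.2.1 ∧ p.1 ≠ p.2.2.2 ∧ p.2.1 ≠ p.2.2.1 ∧ p.2.1 ≠ p.2.2.2 ∧ p.1 < p.2.2.1,
          f p.1 p.2.1 p.2.2.1 p.2.2.2 := by
        congr 2
        exact sum_filter_eq_two_nsmul_of_involutive (fun p => (p.2.2.1, p.2.2.2, p.1, p.2.1))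
          (fun _ => rfl) (by grind) (by grind) fun p => (h_pairs ..).symm
    _ = _ := by simp only [smul_smul]; norm_num

end Symmetrization

section Nesting

variable {ι R : Type*} [Fintype ι] [DecidableEq ι] [AddCommMonoid R]

theorem sum_distinct_triples_eq_sum_sum_sum (f : ι → ι → ι → R) :
    ∑ p : ι × ι × ι with p.1 ≠ p.2.1 ∧ p.1 ≠ p.2.2 ∧ p.2.1 ≠ p.2.2, f p.1 p.2.1 p.2.2 =
      ∑ i, ∑ j ∈ univ.erase i, ∑ k ∈ {i, j}ᶜ, f i j k := by
  rw [sum_filter, Fintype.sum_prod_type]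
  refine sum_congr rfl fun i _ => ?_
  rw [Fintype.sum_prod_type, ← filter_ne', sum_filter]
  refine sum_congr rfl fun j _ => ?_
  split_ifs with hji
  · rw [← Fintype.sum_ite_mem {i, j}ᶜ]
    refine sum_congr rfl fun k _ => ?_
    simp [eq_comm, hji.symm]
  · obtain rfl := not_not.1 hji
    simp

theorem sum_distinct_quadruples_eq_sum_sum_sum_sum (f : ι → ι → ι → ι → R) :
    ∑ p : ι × ι × ι × ι with p.1 ≠ p.2.1 ∧ p.2.2.1 ≠ p.2.2.2 ∧
        p.1 ≠ p.2.2.1 ∧ p.1 ≠ p.2.2.2 ∧ p.2.1 ≠ p.2.2.1 ∧ p.2.1 ≠ p.2.2.2,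
        f p.1 p.2.1 p.2.2.1 p.2.2.2 =
      ∑ i, ∑ j ∈ univ.erase i, ∑ k ∈ {i, j}ᶜ, ∑ l ∈ ({i, j}ᶜ : Finset ι).erase k, f i j k l := by
  rw [sum_filter, Fintype.sum_prod_type]
  refine sum_congr rfl fun i _ => ?_
  rw [Fintype.sum_prod_type, ← filter_ne', sum_filter]
  refine sum_congr rfl fun j _ => ?_
  split_ifs with hji
  · rw [Fintype.sum_prod_type, ← Fintype.sum_ite_mem {i, j}ᶜ]
    refine sum_congr rfl fun k _ => ?_
    rw [← Fintype.sum_ite_mem (({i, j}ᶜ : Finset ι).erase k)]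
    split_ifs with hk
    · refine sum_congr rfl fun l _ => ?_
      simp only [mem_erase, mem_compl, mem_insert, mem_singleton, not_or] at hk ⊢
      grind
    · obtain rfl | rfl : k = i ∨ k = j := by simpa [or_iff_not_imp_left] using hk
      all_goals simp
  · obtain rfl := not_not.1 hji
    simp

end Nesting

section OffDiagonal

variable {ι R : Type*} [DecidableEq ι] [CommRing R] (U : Finset ι)

theorem sum_sum_erase_const (c : R) :
    ∑ i ∈ U, ∑ _j ∈ U.erase i, c = #U * (#U - 1) * c := by
  rw [sum_congr rfl fun i hi => sum_erase_eq_sub (f := fun _ => c) hi]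
  simp only [sum_const, nsmul_eq_mul]
  ring

theorem sum_sum_erase_add (φ : ι → R) :
    ∑ i ∈ U, ∑ j ∈ U.erase i, (φ i + φ j) = 2 * (#U - 1) * ∑ i ∈ U, φ i := by
  have inner : ∀ i ∈ U, ∑ j ∈ U.erase i, (φ i + φ j) = (#U - 2) * φ i + ∑ j ∈ U, φ j := by
    intro i hi
    rw [sum_erase_eq_sub hi, sum_add_distrib, sum_const, nsmul_eq_mul]
    ring
  rw [sum_congr rfl inner, sum_add_distrib, ← mul_sum, sum_const, nsmul_eq_mul]
  ring

theorem sum_sum_erase_mul (φ : ι → R) :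
    ∑ i ∈ U, ∑ j ∈ U.erase i, φ i * φ j = (∑ i ∈ U, φ i) ^ 2 - ∑ i ∈ U, φ i ^ 2 := by
  have inner : ∀ i ∈ U, ∑ j ∈ U.erase i, φ i * φ j = φ i * ∑ j ∈ U, φ j - φ i ^ 2 := by
    intro i hi
    rw [← mul_sum, sum_erase_eq_sub hi]
    ring
  rw [sum_congr rfl inner, sum_sub_distrib, ← sum_mul]
  ring

end OffDiagonal

section ComplPair

variable {ι : Type*} [Fintype ι] [DecidableEq ι] {i j : ι}

theorem sum_compl_pair {R : Type*} [AddCommGroup R] (hij : i ≠ j) (g : ι → R) :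
    ∑ k ∈ ({i, j}ᶜ : Finset ι), g k = ∑ k, g k - g i - g j := by
  rw [← sum_compl_add_sum {i, j} g, sum_pair hij]
  abel

theorem cast_card_compl_pair {R : Type*} [AddGroupWithOne R] (hij : i ≠ j) :
    (#({i, j}ᶜ : Finset ι) : R) = Fintype.card ι - 2 := by
  rw [card_compl, Nat.cast_sub (card_le_univ _), card_pair hij, Nat.cast_ofNat]

end ComplPair

section Evaluation

variable {ι R : Type*} [Fintype ι] [DecidableEq ι] [CommRing R] (μ : ι → R)

theorem sum_distinct_triples_sq :
    ∑ p : ι × ι × ι with p.1 ≠ p.2.1 ∧ p.1 ≠ p.2.2 ∧ p.2.1 ≠ p.2.2,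
        (μ p.1 + μ p.2.1 + μ p.2.2) ^ 2 =
      3 * (Fintype.card ι - 2) * (Fintype.card ι - 3) * ∑ i, μ i ^ 2 +
        6 * (Fintype.card ι - 2) * (∑ i, μ i) ^ 2 := by
  set m : R := (Fintype.card ι : R)
  set S := ∑ i, μ i
  set Q := ∑ i, μ i ^ 2
  have inner : ∀ i, ∀ j ∈ univ.erase i, ∑ k ∈ {i, j}ᶜ, (μ i + μ j + μ k) ^ 2 =
      (m - 5) * (μ i ^ 2 + μ j ^ 2) + 2 * (m - 4) * (μ i * μ j) + 2 * S * (μ i + μ j) + Q := by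
    intro i j hj
    rw [sum_compl_pair (ne_of_mem_erase hj).symm]
    simp only [add_sq, sum_add_distrib, ← mul_sum, sum_const, card_univ, nsmul_eq_mul]
    ring
  have h_sq := sum_sum_erase_add univ (μ · ^ 2)
  have h_lin := sum_sum_erase_add univ μ
  have h_mul := sum_sum_erase_mul univ μ
  have h_const := sum_sum_erase_const (univ : Finset ι) Q
  rw [sum_distinct_triples_eq_sum_sum_sum (fun i j k => (μ i + μ j + μ k) ^ 2),
    sum_congr rfl fun i _ => sum_congr rfl (inner i)]
  simp only [sum_add_distrib, ← mul_sum, card_univ] at h_sq h_lin h_mul h_const ⊢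
  linear_combination (m - 5) * h_sq + 2 * (m - 4) * h_mul + 2 * S * h_lin + h_const

theorem sum_distinct_quadruples_mul :
    ∑ p : ι × ι × ι × ι with p.1 ≠ p.2.1 ∧ p.2.2.1 ≠ p.2.2.2 ∧
        p.1 ≠ p.2.2.1 ∧ p.1 ≠ p.2.2.2 ∧ p.2.1 ≠ p.2.2.1 ∧ p.2.1 ≠ p.2.2.2,
        (μ p.1 + μ p.2.1) * (μ p.2.2.1 + μ p.2.2.2) =
      4 * (Fintype.card ι - 2) * (Fintype.card ι - 3) * ((∑ i, μ i) ^ 2 - ∑ i, μ i ^ 2) := by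
  set m : R := (Fintype.card ι : R)
  set S := ∑ i, μ i
  have inner : ∀ i, ∀ j ∈ univ.erase i, ∑ k ∈ {i, j}ᶜ, ∑ l ∈ ({i, j}ᶜ : Finset ι).erase k,
      (μ i + μ j) * (μ k + μ l) =
        2 * (m - 3) * S * (μ i + μ j) - 2 * (m - 3) * (μ i ^ 2 + μ j ^ 2) -
          4 * (m - 3) * (μ i * μ j) := by
    intro i j hj
    have hij := (ne_of_mem_erase hj).symm
    simp only [← mul_sum]
    rw [sum_sum_erase_add, cast_card_compl_pair hij, sum_compl_pair hij]
    ring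
  have h_sq := sum_sum_erase_add univ (μ · ^ 2)
  have h_lin := sum_sum_erase_add univ μ
  have h_mul := sum_sum_erase_mul univ μ
  rw [sum_distinct_quadruples_eq_sum_sum_sum_sum (fun i j k l => (μ i + μ j) * (μ k + μ l)),
    sum_congr rfl fun i _ => sum_congr rfl (inner i)]
  simp only [sum_sub_distrib, sum_add_distrib, ← mul_sum, card_univ] at h_sq h_lin h_mul ⊢
  linear_combination 2 * (m - 3) * S * h_lin - 2 * (m - 3) * h_sq - 4 * (m - 3) * h_mul

end Evaluation

theorem stmt_4_general (n : ℕ) (μ : Fin (n + 2) → ℝ) (S : ℝ)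
    (hS : S = ∑ k, μ k)
    (A B : ℝ)
    (hA : A = ∑ p ∈ Finset.univ.filter
        (fun p : Fin (n + 2) × Fin (n + 2) × Fin (n + 2) × Fin (n + 2) =>
          p.1 < p.2.1 ∧ p.2.2.1 < p.2.2.2 ∧
          p.1 ≠ p.2.2.1 ∧ p.1 ≠ p.2.2.2 ∧ p.2.1 ≠ p.2.2.1 ∧ p.2.1 ≠ p.2.2.2 ∧
          p.1 < p.2.2.1),
        (μ p.1 + μ p.2.1) * (μ p.2.2.1 + μ p.2.2.2))
    (hB : B = ∑ p ∈ Finset.univ.filter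
        (fun p : Fin (n + 2) × Fin (n + 2) × Fin (n + 2) =>
          p.1 < p.2.1 ∧ p.2.1 < p.2.2),
        (μ p.1 + μ p.2.1 + μ p.2.2) ^ 2) :
    A + B = ((n + 1).choose 2 : ℝ) * S ^ 2 := by
  have h8A := sum_distinct_quadruples_eq_eight_nsmul
    (fun i j k l => (μ i + μ j) * (μ k + μ l)) (by intros; ring) (by intros; ring)
    (by intros; ring)
  have h6B := sum_distinct_triples_eq_six_nsmul
    (fun i j k => (μ i + μ j + μ k) ^ 2) (by intros; ring) (by intros; ring)
  rw [sum_distinct_quadruples_mul, ← hA] at h8A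
  rw [sum_distinct_triples_sq, ← hB] at h6B
  rw [Fintype.card_fin, ← hS, nsmul_eq_mul] at h8A h6B
  rw [Nat.cast_choose_two]
  push_cast at h8A h6B ⊢
  linear_combination -h8A / 8 - h6B / 6

/-- With `A` the sum of `(μ_i+μ_j)(μ_k+μ_l)` over unordered pairs of disjoint
2-element subsets `{i,j}, {k,l}` (each counted once, via `i<j`, `k<l`, disjoint, `i<k`)
and `B = ∑_{i<j<k} (μ_i+μ_j+μ_k)²`, one has `A + B = C(n+1,2)·S²` where `S = ∑ μ_k`. -/
theorem stmt_4 (n : ℕ) (hn : 2 ≤ n) (μ : Fin (n + 2) → ℝ) (S : ℝ)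
    (hS : S = ∑ k, μ k)
    (A B : ℝ)
    (hA : A = ∑ p ∈ Finset.univ.filter
        (fun p : Fin (n + 2) × Fin (n + 2) × Fin (n + 2) × Fin (n + 2) =>
          p.1 < p.2.1 ∧ p.2.2.1 < p.2.2.2 ∧
          p.1 ≠ p.2.2.1 ∧ p.1 ≠ p.2.2.2 ∧ p.2.1 ≠ p.2.2.1 ∧ p.2.1 ≠ p.2.2.2 ∧
          p.1 < p.2.2.1),
        (μ p.1 + μ p.2.1) * (μ p.2.2.1 + μ p.2.2.2))
    (hB : B = ∑ p ∈ Finset.univ.filter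
        (fun p : Fin (n + 2) × Fin (n + 2) × Fin (n + 2) =>
          p.1 < p.2.1 ∧ p.2.1 < p.2.2),
        (μ p.1 + μ p.2.1 + μ p.2.2) ^ 2) :
    A + B = ((n + 1).choose 2 : ℝ) * S ^ 2 :=
  stmt_4_general n μ S hS A B hA hB
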